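/- Let K be a field of characteristic zero and let d, d' ≥ 1 be integers. Let V be the K-vector space with basis {e_{i,j} : 0 ≤ i ≤ d-1, 0 ≤ j ≤ d'-1} and let N be the K-linear endomorphism of V defined by N e_{i,j} = e_{i+1,j} + e_{i,j+1}, where a term whose index is out of range is taken to be 0. Then N^{d+d'-1} = 0 and N^{d+d'-2} ≠ 0; in particular N is nilpotent of nilpotency index exactly d+d'-1. -/

import Mathlib

/-- Let `K` be a field of characteristic zero, `d, d' ≥ 1`, `V` a
`K`-vector space with basis `{e_{i,j} : 0 ≤ i ≤ d-1, 0 ≤ j ≤ d'-1}`, and `N` the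
endomorphism of `V` with `N e_{i,j} = e_{i+1,j} + e_{i,j+1}` (out-of-range terms
being `0`). Then `N ^ (d + d' - 1) = 0` and `N ^ (d + d' - 2) ≠ 0`; in particular `N`
is nilpotent of nilpotency index exactly `d + d' - 1`. -/
theorem grid_monodromy_nilpotency_index
    (K : Type*) [Field K] [CharZero K] (d d' : ℕ) (hd : 1 ≤ d) (hd' : 1 ≤ d')
    (V : Type*) [AddCommGroup V] [Module K V]
    (e : Module.Basis (Fin d × Fin d') K V) (N : V →ₗ[K] V)
    (hN : ∀ (i : Fin d) (j : Fin d'),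
      N (e (i, j)) =
        (if h : (i : ℕ) + 1 < d then e (⟨(i : ℕ) + 1, h⟩, j) else 0) +
        (if h : (j : ℕ) + 1 < d' then e (i, ⟨(j : ℕ) + 1, h⟩) else 0)) :
    N ^ (d + d' - 1) = 0 ∧ N ^ (d + d' - 2) ≠ 0 := by
  -- (A) degree argument
  have hA : ∀ k (i : Fin d) (j : Fin d'), d + d' - 1 ≤ (i : ℕ) + j + k →
      (N ^ k) (e (i, j)) = 0 := by
    intro k
    induction k with
    | zero =>
      intro i j h
      exfalso
      have hi := i.isLt; have hj := j.isLt
      omega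
    | succ k ih =>
      intro i j h
      rw [pow_succ, Module.End.mul_apply, hN, map_add]
      split_ifs with h1 h2 h2
      · rw [ih ⟨(i : ℕ) + 1, h1⟩ j (by simp; omega),
          ih i ⟨(j : ℕ) + 1, h2⟩ (by simp; omega), add_zero]
      · rw [ih ⟨(i : ℕ) + 1, h1⟩ j (by simp; omega), map_zero, add_zero]
      · rw [ih i ⟨(j : ℕ) + 1, h2⟩ (by simp; omega), map_zero, zero_add]
      · simp
  -- (B) the corner coefficient is a binomial coefficient
  have hB : ∀ k (i : Fin d) (j : Fin d'), (i : ℕ) + j + k = d + d' - 2 →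
      e.repr ((N ^ k) (e (i, j))) (⟨d - 1, by omega⟩, ⟨d' - 1, by omega⟩) =
        (Nat.choose k (d - 1 - i) : K) := by
    intro k
    induction k with
    | zero =>
      intro i j h
      have hi := i.isLt; have hj := j.isLt
      have hij : (i : ℕ) = d - 1 ∧ (j : ℕ) = d' - 1 := by omega
      have hp : (i, j) = ((⟨d - 1, by omega⟩, ⟨d' - 1, by omega⟩) : Fin d × Fin d') := by
        ext <;> simp [hij.1, hij.2]
      rw [pow_zero, Module.End.one_apply, hp, e.repr_self]
      simp [hij.1]
    | succ k ih =>
      intro i j h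
      have hi := i.isLt; have hj := j.isLt
      rw [pow_succ, Module.End.mul_apply, hN, map_add, map_add, Finsupp.add_apply]
      split_ifs with h1 h2 h2
      · rw [ih ⟨(i : ℕ) + 1, h1⟩ j (by simp; omega),
          ih i ⟨(j : ℕ) + 1, h2⟩ (by simp; omega)]
        have h3 : d - 1 - (i : ℕ) = (d - 1 - ((i : ℕ) + 1)) + 1 := by omega
        have hnat : Nat.choose k (d - 1 - ((i : ℕ) + 1)) + Nat.choose k (d - 1 - i)
            = Nat.choose (k + 1) (d - 1 - i) := by
          rw [h3]; exact (Nat.choose_succ_succ k _).symm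
        push_cast [← hnat]
        simp
      · -- j = d' - 1
        rw [ih ⟨(i : ℕ) + 1, h1⟩ j (by simp; omega)]
        have h3 : d - 1 - ((i : ℕ) + 1) = k ∧ d - 1 - (i : ℕ) = k + 1 := by omega
        rw [h3.1, h3.2]
        simp [Nat.choose_self]
      · -- i = d - 1
        rw [ih i ⟨(j : ℕ) + 1, h2⟩ (by simp; omega)]
        have h3 : d - 1 - (i : ℕ) = 0 := by omega
        rw [h3]
        simp
      · exfalso; omega
  constructor
  · exact Module.Basis.ext e fun ⟨i, j⟩ => by
      simpa using hA (d + d' - 1) i j (by omega)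
  · intro h0
    have hc := hB (d + d' - 2) ⟨0, by omega⟩ ⟨0, by omega⟩ (by simp)
    rw [h0] at hc
    simp only [LinearMap.zero_apply, map_zero, Finsupp.coe_zero, Pi.zero_apply] at hc
    have : Nat.choose (d + d' - 2) (d - 1 - (0 : ℕ)) = 0 := by exact_mod_cast hc.symm
    have hpos := Nat.choose_pos (show d - 1 - (0:ℕ) ≤ d + d' - 2 by omega)
    omega
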